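/- arXiv:math/0309256 — 2 statements merged into one kernel-verified Lean document; each statement's English description precedes it below -/
import Mathlib

section
/- Let ρ_1,…,ρ_m ∈ ℤ^d generate a pointed real cone C = {Σ_i c_i ρ_i : c_i ≥ 0} ⊆ ℝ^d, let Q = C ∩ ℤ^d, and let G = {Σ_i t_i ρ_i : 0 ≤ t_i ≤ 1} be the associated zonotope. Let τ : ℤ^d → ℤ be a ℤ-linear functional (extended ℝ-linearly to ℝ^d) with τ ≥ 0 on Q, such that F := Q ∩ ker τ is a facet of Q (the ℝ-linear span of F has dimension d − 1). Fix a ∈ Q. Then every b ∈ Q with τ(b) > τ(a) can be written b = b₀ + q, where q ∈ Q and b₀ is a lattice point of the Minkowski sum (({x ∈ ℝ^d : τ(x) = τ(a)}) ∩ ℝ₊D) + G for some face D of Q satisfying D ∩ F = {0}; here ℝ₊D denotes the set of nonnegative real combinations of elements of D. -/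
/-
Scale `b` down to a point `x₀ = (τ a / τ b) • b` of `C` on the level `τ = τ a`, so that
`b - x₀ ∈ C`. Then slide `x₀` as far as possible inside `C` along each nonzero generator lying
in `ker τ`; pointedness of `C` makes each slide bounded, and `τ` and `b - x ∈ C` are preserved.
At the resulting point `x` no such generator can be removed, and Farkas' lemma over `ℚ` then gives
an integral functional `y ≥ 0` on `C` vanishing on the support of `x` and positive on those
generators: its zero set `D` is a face with `D ∩ F = {0}` and `x ∈ ℝ₊D`. Finally, writing
`b - x = ∑ eⱼ ρⱼ` and rounding the `eⱼ` down splits off `q = ∑ ⌊eⱼ⌋ ρⱼ ∈ Q`, and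
`b - q ∈ x + G`.
-/

open Pointwise

/-- Coercion of a lattice point in `ℤ^d` to a point of `ℝ^d`. -/
def toR {d : ℕ} (x : Fin d → ℤ) : Fin d → ℝ := fun i => (x i : ℝ)

/-- `F` is a face of the affine semigroup (given as a subset of `ℤ^d`) `Q`:
it is cut out of `Q` by a `ℤ`-linear functional that is nonnegative on `Q`. -/
def IsFaceOf {d : ℕ} (Q F : Set (Fin d → ℤ)) : Prop :=
  ∃ lam : (Fin d → ℤ) →ₗ[ℤ] ℤ, (∀ q ∈ Q, 0 ≤ lam q) ∧ F = {q | q ∈ Q ∧ lam q = 0}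

/-- The `ℝ`-linear extension of a `ℤ`-linear functional on `ℤ^d` to `ℝ^d`. -/
def extR {d : ℕ} (τ : (Fin d → ℤ) →ₗ[ℤ] ℤ) : (Fin d → ℝ) → ℝ :=
  fun y => ∑ i, y i * (τ (Pi.single i 1) : ℝ)

/-- `ℝ₊S`: the set of nonnegative real combinations of elements of `S ⊆ ℝ^d`. -/
def nonnegSpan {d : ℕ} (S : Set (Fin d → ℝ)) : Set (Fin d → ℝ) :=
  {y | ∃ (N : ℕ) (v : Fin N → (Fin d → ℝ)) (c : Fin N → ℝ),
    (∀ i, v i ∈ S) ∧ (∀ i, 0 ≤ c i) ∧ y = ∑ i, c i • v i}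

open Matrix

section FinCone

variable {𝕜 ι κ : Type*} [Fintype ι]

def finCone [Semiring 𝕜] [PartialOrder 𝕜] (w : ι → κ → 𝕜) : Set (κ → 𝕜) :=
  {y | ∃ c : ι → 𝕜, (∀ i, 0 ≤ c i) ∧ y = ∑ i, c i • w i}

def zonotope [Semiring 𝕜] [PartialOrder 𝕜] (w : ι → κ → 𝕜) : Set (κ → 𝕜) :=
  {y | ∃ t : ι → 𝕜, (∀ i, 0 ≤ t i ∧ t i ≤ 1) ∧ y = ∑ i, t i • w i}

variable [Semiring 𝕜] [PartialOrder 𝕜] {w : ι → κ → 𝕜}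

theorem zero_mem_finCone : (0 : κ → 𝕜) ∈ finCone w :=
  ⟨0, fun _ => le_rfl, by simp⟩

variable [IsOrderedRing 𝕜]

theorem mem_finCone (w : ι → κ → 𝕜) (i : ι) : w i ∈ finCone w := by
  classical
  exact ⟨Pi.single i 1, fun j => by by_cases h : j = i <;> simp [h], by simp [Pi.single_apply]⟩

theorem add_mem_finCone {x y : κ → 𝕜} (hx : x ∈ finCone w) (hy : y ∈ finCone w) :
    x + y ∈ finCone w := by
  obtain ⟨c, hc, rfl⟩ := hx
  obtain ⟨e, he, rfl⟩ := hy
  exact ⟨c + e, fun i => add_nonneg (hc i) (he i), by simp [add_smul, Finset.sum_add_distrib]⟩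

theorem smul_mem_finCone {x : κ → 𝕜} {t : 𝕜} (ht : 0 ≤ t) (hx : x ∈ finCone w) :
    t • x ∈ finCone w := by
  obtain ⟨c, hc, rfl⟩ := hx
  exact ⟨t • c, fun i => mul_nonneg ht (hc i), by simp [Finset.smul_sum, smul_smul]⟩

theorem sum_mem_finCone (s : Finset ι) : ∑ i ∈ s, w i ∈ finCone w := by
  classical
  induction s using Finset.induction_on with
  | empty => simpa using zero_mem_finCone
  | insert i s hi ih => simpa [Finset.sum_insert hi] using add_mem_finCone (mem_finCone w i) ih

end FinCone

theorem neg_notMem_finCone {𝕜 ι κ : Type*} [Fintype ι] [Ring 𝕜] [PartialOrder 𝕜]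
    [IsOrderedRing 𝕜] {w : ι → κ → 𝕜} (hw : finCone w ∩ -finCone w = {0}) {i : ι}
    (hi : w i ≠ 0) : -w i ∉ finCone w := fun h =>
  hi ((Set.eq_singleton_iff_unique_mem.1 hw).2 _ ⟨mem_finCone w i, Set.mem_neg.2 h⟩)

section OrderedField

variable {𝕜 ι κ : Type*} [Fintype ι] [Field 𝕜] [LinearOrder 𝕜] [IsStrictOrderedRing 𝕜]

theorem ratCast_mem_finCone {w : ι → κ → ℚ} {y : κ → ℚ} (hy : y ∈ finCone w) :
    (fun k => (y k : 𝕜)) ∈ finCone (fun i k => (w i k : 𝕜)) := by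
  obtain ⟨c, hc, rfl⟩ := hy
  exact ⟨fun i => c i, fun i => Rat.cast_nonneg.2 (hc i), by ext; simp⟩

theorem exists_pos_forall_le_of_ne_zero {p : ι → 𝕜} (hp : ∀ j, 0 ≤ p j) :
    ∃ μ : 𝕜, 0 < μ ∧ ∀ k, p k ≠ 0 → μ ≤ p k := by
  rcases (Finset.univ.filter (p · ≠ 0)).eq_empty_or_nonempty with hS | hS
  · exact ⟨1, one_pos, fun k hk => (Finset.filter_eq_empty_iff.1 hS (Finset.mem_univ k) hk).elim⟩
  · obtain ⟨k₀, hk₀, hmin⟩ := Finset.exists_min_image _ p hS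
    exact ⟨p k₀, (hp k₀).lt_of_ne' (Finset.mem_filter.1 hk₀).2,
      fun k hk => hmin k (by simpa using hk)⟩

theorem sum_support_sub_smul_notMem {w : ι → κ → 𝕜} {p : ι → 𝕜} (hp : ∀ j, 0 ≤ p j) {i : ι}
    (h : ∀ δ : 𝕜, 0 < δ → ∑ j, p j • w j - δ • w i ∉ finCone w) (δ : 𝕜) (hδ : 0 < δ) :
    ∑ k ∈ Finset.univ.filter (p · ≠ 0), w k - δ • w i ∉ finCone w := by
  intro hmem
  obtain ⟨μ, hμ, hμp⟩ := exists_pos_forall_le_of_ne_zero hp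
  -- `∑ p j • w j - (μ * δ) • w i = μ • (u - δ • w i) + ∑ (p j - μ [p j ≠ 0]) • w j`,
  -- where `u` is the sum of `w k` over the support of `p`
  refine h (μ * δ) (mul_pos hμ hδ) ?_
  have hrest : ∑ j, (p j - if p j ≠ 0 then μ else 0) • w j ∈ finCone w :=
    ⟨_, fun j => by split_ifs with hj <;> simp [hμp j, hp j, *], rfl⟩
  convert add_mem_finCone (smul_mem_finCone hμ.le hmem) hrest using 1
  simp only [Finset.sum_filter, smul_sub, Finset.smul_sum, sub_smul, Finset.sum_sub_distrib,
    ite_smul, zero_smul, smul_ite, smul_zero, mul_smul]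
  abel

variable [Fintype κ]

theorem dotProduct_nonneg_of_mem_finCone {w : ι → κ → 𝕜} {z y : κ → 𝕜}
    (hz : ∀ i, 0 ≤ z ⬝ᵥ w i) (hy : y ∈ finCone w) : 0 ≤ z ⬝ᵥ y := by
  obtain ⟨c, hc, rfl⟩ := hy
  rw [dotProduct_sum]
  exact Finset.sum_nonneg fun i _ => by simpa [dotProduct_smul] using mul_nonneg (hc i) (hz i)

theorem eq_zero_of_mem_finCone_of_dotProduct_eq_zero {w : ι → κ → 𝕜} {z x : κ → 𝕜}
    (hz : ∀ i, w i ≠ 0 → 0 < z ⬝ᵥ w i) (hx : x ∈ finCone w) (h : z ⬝ᵥ x = 0) : x = 0 := by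
  obtain ⟨c, hc, rfl⟩ := hx
  have hz' : ∀ i, 0 ≤ c i * (z ⬝ᵥ w i) := fun i => by
    by_cases hw : w i = 0
    · simp [hw]
    · exact mul_nonneg (hc i) (hz i hw).le
  simp only [dotProduct_sum, dotProduct_smul, smul_eq_mul] at h
  refine Finset.sum_eq_zero fun i _ => ?_
  by_cases hw : w i = 0
  · simp [hw]
  · have := (Finset.sum_eq_zero_iff_of_nonneg fun i _ => hz' i).1 h i (Finset.mem_univ i)
    simp [(mul_eq_zero.1 this).resolve_right (hz i hw).ne']

/-- The transpose of the projection along `w` onto the hyperplane `z₀ ⬝ᵥ · = 0`. -/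
theorem dotProduct_sub_div_smul (z z₀ w u : κ → 𝕜) :
    z ⬝ᵥ (u - (z₀ ⬝ᵥ u / z₀ ⬝ᵥ w) • w) = (z - (z ⬝ᵥ w / z₀ ⬝ᵥ w) • z₀) ⬝ᵥ u := by
  simp only [dotProduct_sub, sub_dotProduct, dotProduct_smul, smul_dotProduct, smul_eq_mul]
  ring

variable {n : ℕ} {w : Fin n → κ → 𝕜}

theorem mem_finCone_of_forall_dotProduct_nonneg (w : Fin n → κ → 𝕜) (y : κ → 𝕜)
    (h : ∀ z, (∀ i, 0 ≤ z ⬝ᵥ w i) → 0 ≤ z ⬝ᵥ y) : y ∈ finCone w := by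
  induction n generalizing y with
  | zero =>
    have hy : y ⬝ᵥ y ≤ 0 := by simpa using h (-y) (fun i => i.elim0)
    have hy' : 0 ≤ y ⬝ᵥ y := Finset.sum_nonneg fun i _ => mul_self_nonneg (y i)
    refine ⟨0, fun _ => le_rfl, ?_⟩
    simpa using dotProduct_self_eq_zero.1 (hy.antisymm hy')
  | succ n ih =>
    by_cases hinit : ∀ z, (∀ i : Fin n, 0 ≤ z ⬝ᵥ w i.castSucc) → 0 ≤ z ⬝ᵥ y
    · obtain ⟨c, hc, rfl⟩ := ih (fun i => w i.castSucc) y hinit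
      refine ⟨Fin.snoc c 0, Fin.lastCases (by simp) (by simpa using hc), ?_⟩
      simp [Fin.sum_univ_castSucc]
    push Not at hinit
    obtain ⟨z₀, hz₀w, hz₀y⟩ := hinit
    have hz₀wn : z₀ ⬝ᵥ w (Fin.last n) < 0 := by
      by_contra! hge
      exact hz₀y.not_ge (h z₀ (Fin.lastCases hge hz₀w))
    -- project along `w (Fin.last n)` onto the hyperplane `z₀ ⬝ᵥ · = 0` and use induction there
    obtain ⟨α, hα⟩ : ∃ α : (κ → 𝕜) → 𝕜, ∀ u, α u = z₀ ⬝ᵥ u / z₀ ⬝ᵥ w (Fin.last n) :=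
      ⟨_, fun _ => rfl⟩
    obtain ⟨c, hc, hcy⟩ := ih (fun i => w i.castSucc - α (w i.castSucc) • w (Fin.last n))
      (y - α y • w (Fin.last n)) fun z hz => by
        rw [hα, dotProduct_sub_div_smul]
        refine h _ (Fin.lastCases ?_ fun i => ?_)
        · simp [sub_dotProduct, smul_dotProduct, hz₀wn.ne]
        · simpa only [hα, dotProduct_sub_div_smul] using hz i
    have hμ : 0 ≤ α y - ∑ i, c i * α (w i.castSucc) := by
      have hy : 0 ≤ α y := by rw [hα]; exact (div_pos_of_neg_of_neg hz₀y hz₀wn).le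
      have hw : ∀ i : Fin n, c i * α (w i.castSucc) ≤ 0 := fun i =>
        mul_nonpos_of_nonneg_of_nonpos (hc i)
          (by rw [hα]; exact div_nonpos_of_nonneg_of_nonpos (hz₀w i) hz₀wn.le)
      linarith [Finset.sum_nonpos fun i (_ : i ∈ Finset.univ) => hw i]
    refine ⟨Fin.snoc c (α y - ∑ i, c i * α (w i.castSucc)),
      Fin.lastCases (by simpa using hμ) (by simpa using hc), ?_⟩
    simp only [smul_sub, Finset.sum_sub_distrib, smul_smul, ← Finset.sum_smul] at hcy
    rw [Fin.sum_univ_castSucc]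
    simp only [Fin.snoc_castSucc, Fin.snoc_last]
    linear_combination (norm := module) hcy

theorem exists_dotProduct_neg_of_notMem_finCone {y : κ → 𝕜} (hy : y ∉ finCone w) :
    ∃ z, (∀ i, 0 ≤ z ⬝ᵥ w i) ∧ z ⬝ᵥ y < 0 := by
  by_contra! h
  exact hy (mem_finCone_of_forall_dotProduct_nonneg w y h)

theorem exists_dotProduct_pos_of_sub_smul_notMem (S : Finset (Fin n)) {i : Fin n}
    (h : ∀ δ : 𝕜, 0 < δ → ∑ k ∈ S, w k - δ • w i ∉ finCone w) :
    ∃ z, (∀ j, 0 ≤ z ⬝ᵥ w j) ∧ (∀ k ∈ S, z ⬝ᵥ w k = 0) ∧ 0 < z ⬝ᵥ w i := by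
  set u := ∑ k ∈ S, w k
  have hnot : -w i ∉ finCone (Fin.snoc w (-u) : Fin (n + 1) → κ → 𝕜) := by
    rintro ⟨c, hc, hci⟩
    simp only [Fin.sum_univ_castSucc, Fin.snoc_castSucc, Fin.snoc_last] at hci
    have hmem : c (Fin.last n) • u - w i ∈ finCone w :=
      ⟨fun j => c j.castSucc, fun j => hc j.castSucc, by linear_combination (norm := module) hci⟩
    rcases (hc (Fin.last n)).eq_or_lt with he | he
    · refine h 1 one_pos ?_
      simpa [← he, sub_eq_add_neg] using add_mem_finCone (sum_mem_finCone S) hmem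
    · refine h (c (Fin.last n))⁻¹ (inv_pos.2 he) ?_
      convert smul_mem_finCone (inv_nonneg.2 he.le) hmem using 1
      rw [smul_sub, smul_smul, inv_mul_cancel₀ he.ne', one_smul]
  obtain ⟨z, hz, hzi⟩ := exists_dotProduct_neg_of_notMem_finCone hnot
  have hzw : ∀ j, 0 ≤ z ⬝ᵥ w j := fun j => by simpa using hz j.castSucc
  have hzu : ∑ k ∈ S, z ⬝ᵥ w k ≤ 0 := by simpa [u, dotProduct_sum] using hz (Fin.last n)
  refine ⟨z, hzw, fun k hk => ?_, by simpa using hzi⟩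
  exact (Finset.sum_eq_zero_iff_of_nonneg fun k _ => hzw k).1
    (hzu.antisymm (Finset.sum_nonneg fun k _ => hzw k)) k hk

theorem exists_forall_dotProduct_pos_of_sub_smul_notMem (S B : Finset (Fin n))
    (h : ∀ i ∈ B, ∀ δ : 𝕜, 0 < δ → ∑ k ∈ S, w k - δ • w i ∉ finCone w) :
    ∃ z, (∀ j, 0 ≤ z ⬝ᵥ w j) ∧ (∀ k ∈ S, z ⬝ᵥ w k = 0) ∧ ∀ i ∈ B, 0 < z ⬝ᵥ w i := by
  choose! z hz0 hzS hzi using fun i hi =>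
    exists_dotProduct_pos_of_sub_smul_notMem S (h i hi)
  refine ⟨∑ i ∈ B, z i, fun j => ?_, fun k hk => ?_, fun i hi => ?_⟩ <;> rw [sum_dotProduct]
  · exact Finset.sum_nonneg fun i hi => hz0 i hi j
  · exact Finset.sum_eq_zero fun i hi => hzS i hi k hk
  · exact (hzi i hi).trans_le
      (Finset.single_le_sum (f := fun l => z l ⬝ᵥ w i) (fun l hl => hz0 l hl i) hi)

end OrderedField

section Real

variable {κ : Type*} [Fintype κ] {n : ℕ} {w : Fin n → κ → ℝ}

theorem isClosed_finCone (w : Fin n → κ → ℝ) : IsClosed (finCone w) := by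
  have : finCone w = ⋂ z ∈ {z : κ → ℝ | ∀ i, 0 ≤ z ⬝ᵥ w i}, {y | 0 ≤ z ⬝ᵥ y} := by
    ext y
    simp only [Set.mem_iInter]
    exact ⟨fun hy z hz => dotProduct_nonneg_of_mem_finCone hz hy,
      mem_finCone_of_forall_dotProduct_nonneg w y⟩
  rw [this]
  exact isClosed_biInter fun z _ => isClosed_le continuous_const (by fun_prop)

theorem exists_sub_mem_finCone_dotProduct_eq {x t : κ → ℝ} (hx : x ∈ finCone w) {A : ℝ}
    (hA : 0 ≤ A) (hAx : A ≤ t ⬝ᵥ x) : ∃ x₀ ∈ finCone w, x - x₀ ∈ finCone w ∧ t ⬝ᵥ x₀ = A := by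
  have hs : 0 ≤ A / (t ⬝ᵥ x) := div_nonneg hA (hA.trans hAx)
  refine ⟨(A / (t ⬝ᵥ x)) • x, smul_mem_finCone hs hx, ?_, ?_⟩
  · rw [show x - (A / (t ⬝ᵥ x)) • x = (1 - A / (t ⬝ᵥ x)) • x by rw [sub_smul, one_smul]]
    exact smul_mem_finCone (sub_nonneg.2 (div_le_one_of_le₀ hAx (hA.trans hAx))) hx
  · rcases (hA.trans hAx).eq_or_lt with h | h
    · simp [← h, le_antisymm (h ▸ hAx) hA]
    · rw [dotProduct_smul, smul_eq_mul, div_mul_cancel₀ _ h.ne']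

theorem exists_maximal_sub_smul_mem_finCone {x u : κ → ℝ} (hx : x ∈ finCone w)
    (hu : -u ∉ finCone w) :
    ∃ ε : ℝ, 0 ≤ ε ∧ x - ε • u ∈ finCone w ∧ ∀ δ : ℝ, 0 < δ → x - ε • u - δ • u ∉ finCone w := by
  obtain ⟨z, hzw, hzu⟩ := exists_dotProduct_neg_of_notMem_finCone hu
  rw [dotProduct_neg, neg_neg_iff_pos] at hzu
  set T := {ε : ℝ | 0 ≤ ε ∧ x - ε • u ∈ finCone w}
  have hT : BddAbove T := by
    refine ⟨z ⬝ᵥ x / z ⬝ᵥ u, fun ε hε => ?_⟩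
    have := dotProduct_nonneg_of_mem_finCone hzw hε.2
    rw [dotProduct_sub, dotProduct_smul, smul_eq_mul] at this
    rw [le_div_iff₀ hzu]
    linarith
  have hTclosed : IsClosed T :=
    isClosed_Ici.inter ((isClosed_finCone w).preimage (by fun_prop))
  have hmem : sSup T ∈ T := hTclosed.csSup_mem ⟨0, le_rfl, by simpa using hx⟩ hT
  refine ⟨sSup T, hmem.1, hmem.2, fun δ hδ hδmem => ?_⟩
  have : sSup T + δ ≤ sSup T :=
    le_csSup hT ⟨by linarith [hmem.1], by rwa [add_smul, ← sub_sub]⟩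
  linarith

theorem exists_sub_mem_finCone_forall_sub_smul_notMem (t : κ → ℝ) (s : Finset (Fin n))
    (hs : ∀ i ∈ s, -w i ∉ finCone w ∧ t ⬝ᵥ w i = 0) {x : κ → ℝ} (hx : x ∈ finCone w) :
    ∃ x' ∈ finCone w, x - x' ∈ finCone w ∧ t ⬝ᵥ x' = t ⬝ᵥ x ∧
      ∀ i ∈ s, ∀ δ : ℝ, 0 < δ → x' - δ • w i ∉ finCone w := by
  induction s using Finset.induction_on with
  | empty => exact ⟨x, hx, by simpa using zero_mem_finCone, rfl, by simp⟩
  | insert i s hi ih =>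
    obtain ⟨hi_neg, hi_t⟩ := hs i (Finset.mem_insert_self i s)
    obtain ⟨x₁, hx₁, hxx₁, htx₁, hx₁s⟩ := ih fun j hj => hs j (Finset.mem_insert_of_mem hj)
    obtain ⟨ε, hε, hx', hmax⟩ := exists_maximal_sub_smul_mem_finCone hx₁ hi_neg
    have hεw : ε • w i ∈ finCone w := smul_mem_finCone hε (mem_finCone w i)
    refine ⟨x₁ - ε • w i, hx', ?_, ?_, ?_⟩
    · convert add_mem_finCone hxx₁ hεw using 1; abel
    · simp [dotProduct_sub, dotProduct_smul, hi_t, htx₁]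
    · rintro j hj δ hδ hmem
      rcases Finset.mem_insert.1 hj with rfl | hj
      · exact hmax δ hδ hmem
      · exact hx₁s j hj δ hδ (by convert add_mem_finCone hmem hεw using 1; abel)

end Real

theorem exists_int_eq_mul {κ : Type*} [Fintype κ] (z : κ → ℚ) :
    ∃ (y : κ → ℤ) (N : ℚ), 0 < N ∧ ∀ k, (y k : ℚ) = N * z k := by
  classical
  refine ⟨fun k => (z k).num * ∏ j ∈ Finset.univ.erase k, ((z j).den : ℤ),
    ∏ j, ((z j).den : ℚ), Finset.prod_pos fun j _ => by exact_mod_cast (z j).pos, fun k => ?_⟩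
  rw [← Finset.mul_prod_erase _ _ (Finset.mem_univ k), mul_right_comm, Rat.den_mul_eq_num]
  push_cast
  ring

section Lattice

variable {d m : ℕ} {ρ : Fin m → Fin d → ℤ}

theorem toR_injective : Function.Injective (toR : (Fin d → ℤ) → Fin d → ℝ) :=
  fun x y h => funext fun k => by simpa [toR] using congrFun h k

@[simp] theorem toR_zero : toR (0 : Fin d → ℤ) = 0 := by ext; simp [toR]

theorem toR_sub (x y : Fin d → ℤ) : toR (x - y) = toR x - toR y := by ext; simp [toR]

theorem toR_dotProduct (x y : Fin d → ℤ) : toR x ⬝ᵥ toR y = ((x ⬝ᵥ y : ℤ) : ℝ) := by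
  simp [toR, dotProduct]

theorem toR_sum_zsmul (c : Fin m → ℤ) : toR (∑ j, c j • ρ j) = ∑ j, (c j : ℝ) • toR (ρ j) := by
  ext; simp [toR]

theorem LinearMap.exists_eq_dotProduct (τ : (Fin d → ℤ) →ₗ[ℤ] ℤ) :
    ∃ t : Fin d → ℤ, ∀ q, τ q = t ⬝ᵥ q := by
  refine ⟨fun k => τ (Pi.single k 1), fun q => ?_⟩
  rw [LinearMap.pi_apply_eq_sum_univ, dotProduct]
  refine Finset.sum_congr rfl fun k _ => ?_
  rw [smul_eq_mul, mul_comm]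
  congr 2
  ext j
  simp [Pi.single_apply, eq_comm]

theorem extR_eq_dotProduct {τ : (Fin d → ℤ) →ₗ[ℤ] ℤ} {t : Fin d → ℤ}
    (ht : ∀ q, τ q = t ⬝ᵥ q) (x : Fin d → ℝ) : extR τ x = toR t ⬝ᵥ x := by
  simp [extR, toR, dotProduct, ht, Pi.single_apply, mul_comm]

theorem isFaceOf_setOf_dotProduct_eq_zero {Q : Set (Fin d → ℤ)} {y : Fin d → ℤ}
    (hy : ∀ q ∈ Q, 0 ≤ y ⬝ᵥ q) : IsFaceOf Q {q | q ∈ Q ∧ y ⬝ᵥ q = 0} :=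
  ⟨dotProductBilin ℤ ℤ y, by simpa using hy, by simp⟩

theorem sum_smul_mem_nonnegSpan {n : ℕ} {S : Set (Fin d → ℝ)} (hS : 0 ∈ S)
    {w : Fin n → Fin d → ℝ} {p : Fin n → ℝ} (hp : ∀ j, 0 ≤ p j) (hw : ∀ j, p j ≠ 0 → w j ∈ S) :
    ∑ j, p j • w j ∈ nonnegSpan S := by
  refine ⟨n, fun j => if p j = 0 then 0 else w j, p, fun j => ?_, hp, ?_⟩
  · dsimp only
    split_ifs with h
    exacts [hS, hw j h]
  · refine Finset.sum_congr rfl fun j _ => ?_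
    dsimp only
    split_ifs with h <;> simp [h]

theorem dotProduct_nonneg_of_toR_mem_finCone {y q : Fin d → ℤ} (hy : ∀ j, 0 ≤ y ⬝ᵥ ρ j)
    (hq : toR q ∈ finCone fun j => toR (ρ j)) : 0 ≤ y ⬝ᵥ q := by
  have := dotProduct_nonneg_of_mem_finCone (z := toR y) (fun j => by
    rw [toR_dotProduct]; exact_mod_cast hy j) hq
  rwa [toR_dotProduct, Int.cast_nonneg_iff] at this

theorem eq_zero_of_dotProduct_eq_zero {y t q : Fin d → ℤ} (hy : ∀ j, 0 ≤ y ⬝ᵥ ρ j)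
    (ht : ∀ j, 0 ≤ t ⬝ᵥ ρ j) (hyt : ∀ j, t ⬝ᵥ ρ j = 0 → ρ j ≠ 0 → 0 < y ⬝ᵥ ρ j)
    (hq : toR q ∈ finCone fun j => toR (ρ j)) (hyq : y ⬝ᵥ q = 0) (htq : t ⬝ᵥ q = 0) : q = 0 := by
  refine toR_injective (toR_zero ▸ eq_zero_of_mem_finCone_of_dotProduct_eq_zero
    (z := toR (y + t)) (fun j hj => ?_) hq ?_)
  · have hj : ρ j ≠ 0 := fun h => hj (by simp [h])
    rw [toR_dotProduct, add_dotProduct]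
    rcases (ht j).eq_or_lt with h | h
    · exact_mod_cast add_pos_of_pos_of_nonneg (hyt j h.symm hj) h.le
    · exact_mod_cast add_pos_of_nonneg_of_pos (hy j) h
  · simp [toR_dotProduct, add_dotProduct, hyq, htq]

theorem exists_sub_mem_zonotope {y : Fin d → ℝ} (hy : y ∈ finCone fun j => toR (ρ j)) :
    ∃ q : Fin d → ℤ, toR q ∈ finCone (fun j => toR (ρ j)) ∧
      y - toR q ∈ zonotope fun j => toR (ρ j) := by
  obtain ⟨c, hc, rfl⟩ := hy
  refine ⟨∑ j, ⌊c j⌋ • ρ j, ?_, fun j => Int.fract (c j),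
    fun j => ⟨Int.fract_nonneg _, (Int.fract_lt_one _).le⟩, ?_⟩
  · rw [toR_sum_zsmul]
    exact ⟨_, fun j => Int.cast_nonneg_iff.2 (Int.floor_nonneg.2 (hc j)), rfl⟩
  · simp only [toR_sum_zsmul, Int.fract, sub_smul, Finset.sum_sub_distrib]

theorem exists_int_dotProduct_pos {p : Fin m → ℝ} (hp : ∀ j, 0 ≤ p j) (B : Finset (Fin m))
    (hB : ∀ i ∈ B, ∀ δ : ℝ, 0 < δ →
      ∑ j, p j • toR (ρ j) - δ • toR (ρ i) ∉ finCone fun j => toR (ρ j)) :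
    ∃ y : Fin d → ℤ, (∀ j, 0 ≤ y ⬝ᵥ ρ j) ∧ (∀ j, p j ≠ 0 → y ⬝ᵥ ρ j = 0) ∧
      ∀ i ∈ B, 0 < y ⬝ᵥ ρ i := by
  set wQ : Fin m → Fin d → ℚ := fun j k => ρ j k
  have hcast : (fun j k => (wQ j k : ℝ)) = fun j => toR (ρ j) := by ext; simp [wQ, toR]
  obtain ⟨z, hz0, hzS, hzB⟩ :=
    exists_forall_dotProduct_pos_of_sub_smul_notMem (w := wQ)
      (Finset.univ.filter (p · ≠ 0)) B fun i hi δ hδ hmem => by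
        refine sum_support_sub_smul_notMem hp (hB i hi) δ (Rat.cast_pos.2 hδ) ?_
        convert hcast ▸ ratCast_mem_finCone (𝕜 := ℝ) hmem using 1
        ext k
        simp [toR, wQ, Finset.sum_apply]
  obtain ⟨y, N, hN, hy⟩ := exists_int_eq_mul z
  have hyρ : ∀ j, ((y ⬝ᵥ ρ j : ℤ) : ℚ) = N * (z ⬝ᵥ wQ j) := fun j => by
    simp [dotProduct, hy, Finset.mul_sum, mul_assoc, wQ]
  refine ⟨y, fun j => ?_, fun j hj => ?_, fun i hi => ?_⟩
  · rw [← Int.cast_nonneg_iff (R := ℚ), hyρ]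
    exact mul_nonneg hN.le (hz0 j)
  · rw [← Int.cast_eq_zero (α := ℚ), hyρ, hzS j (by simpa using hj), mul_zero]
  · rw [← Int.cast_pos (R := ℚ), hyρ]
    exact mul_pos hN (hzB i hi)

theorem exists_level_point_and_exposing_functional {t : Fin d → ℤ}
    (hpointed : ∀ j, ρ j ≠ 0 → -toR (ρ j) ∉ finCone fun j => toR (ρ j)) {b : Fin d → ℤ}
    (hb : toR b ∈ finCone fun j => toR (ρ j)) {A : ℝ} (hA : 0 ≤ A) (hAb : A ≤ t ⬝ᵥ b) :
    ∃ (p : Fin m → ℝ) (y : Fin d → ℤ), (∀ j, 0 ≤ p j) ∧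
      toR b - ∑ j, p j • toR (ρ j) ∈ (finCone fun j => toR (ρ j)) ∧
      toR t ⬝ᵥ ∑ j, p j • toR (ρ j) = A ∧ (∀ j, 0 ≤ y ⬝ᵥ ρ j) ∧
      (∀ j, p j ≠ 0 → y ⬝ᵥ ρ j = 0) ∧ ∀ j, t ⬝ᵥ ρ j = 0 → ρ j ≠ 0 → 0 < y ⬝ᵥ ρ j := by
  obtain ⟨x₀, hx₀, hbx₀, htx₀⟩ :=
    exists_sub_mem_finCone_dotProduct_eq hb hA (by rwa [toR_dotProduct])
  set B := Finset.univ.filter fun j => t ⬝ᵥ ρ j = 0 ∧ ρ j ≠ 0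
  obtain ⟨x, ⟨p, hp, rfl⟩, hx₀x, htx, hxB⟩ :=
    exists_sub_mem_finCone_forall_sub_smul_notMem (toR t) B (fun i hi => by
      obtain ⟨hti, hi⟩ := (Finset.mem_filter.1 hi).2
      exact ⟨hpointed i hi, by simp [toR_dotProduct, hti]⟩) hx₀
  obtain ⟨y, hy, hyp, hyB⟩ := exists_int_dotProduct_pos hp B hxB
  refine ⟨p, y, hp, ?_, htx.trans htx₀, hy, hyp, fun j htj hj => hyB j (by simp [B, htj, hj])⟩
  convert add_mem_finCone hbx₀ hx₀x using 1
  abel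

end Lattice

theorem stmt3_general {d m : ℕ} (ρ : Fin m → (Fin d → ℤ))
    (C : Set (Fin d → ℝ))
    (hC : C = {y | ∃ c : Fin m → ℝ, (∀ i, 0 ≤ c i) ∧ y = ∑ i, c i • toR (ρ i)})
    (hpointed : C ∩ (-C) = {0})
    (Q : Set (Fin d → ℤ)) (hQ : Q = {q | toR q ∈ C})
    (G : Set (Fin d → ℝ))
    (hG : G = {y | ∃ t : Fin m → ℝ, (∀ i, 0 ≤ t i ∧ t i ≤ 1) ∧ y = ∑ i, t i • toR (ρ i)})
    (τ : (Fin d → ℤ) →ₗ[ℤ] ℤ) (hτpos : ∀ q ∈ Q, 0 ≤ τ q)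
    (F : Set (Fin d → ℤ)) (hFdef : F = {q | q ∈ Q ∧ τ q = 0})
    (a : Fin d → ℤ) (ha : a ∈ Q)
    (b : Fin d → ℤ) (hb : b ∈ Q) (hba : τ a < τ b) :
    ∃ D : Set (Fin d → ℤ), IsFaceOf Q D ∧ D ∩ F = {0} ∧
      ∃ (b₀ : Fin d → ℤ) (q : Fin d → ℤ), q ∈ Q ∧ b = b₀ + q ∧
        toR b₀ ∈ ({x | extR τ x = (τ a : ℝ)} ∩ nonnegSpan (toR '' D)) + G := by
  change C = finCone _ at hC
  change G = zonotope _ at hG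
  subst hC hQ hG hFdef
  obtain ⟨t, hτt⟩ := τ.exists_eq_dotProduct
  simp only [hτt] at hτpos hba ⊢
  have ht : ∀ j, 0 ≤ t ⬝ᵥ ρ j := fun j => hτpos _ (mem_finCone (fun i => toR (ρ i)) j)
  obtain ⟨p, y, hp, hbx, hxA, hy, hyp, hyt⟩ := exists_level_point_and_exposing_functional
    (fun j hj => neg_notMem_finCone hpointed (fun h => hj (toR_injective (by simpa using h))))
    hb (Int.cast_nonneg_iff.2 (hτpos a ha)) (by exact_mod_cast hba.le)
  obtain ⟨q, hq, hbq⟩ := exists_sub_mem_zonotope hbx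
  set x := ∑ j, p j • toR (ρ j)
  set D := {q | q ∈ {q | toR q ∈ finCone fun j => toR (ρ j)} ∧ y ⬝ᵥ q = 0}
  have h0D : (0 : Fin d → ℤ) ∈ D := ⟨by simpa using zero_mem_finCone, by simp⟩
  have hxD : x ∈ nonnegSpan (toR '' D) :=
    sum_smul_mem_nonnegSpan (by exact ⟨0, h0D, toR_zero⟩) hp fun j hj =>
      ⟨ρ j, ⟨mem_finCone (fun i => toR (ρ i)) j, hyp j hj⟩, rfl⟩
  refine ⟨D, isFaceOf_setOf_dotProduct_eq_zero fun q hq =>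
    dotProduct_nonneg_of_toR_mem_finCone hy hq, ?_, b - q, q, hq, (sub_add_cancel b q).symm, ?_⟩
  · refine Set.eq_singleton_iff_unique_mem.2 ⟨Set.mem_inter h0D ⟨h0D.1, by simp⟩, ?_⟩
    rintro q ⟨⟨hq, hyq⟩, -, htq⟩
    exact eq_zero_of_dotProduct_eq_zero hy ht hyt hq hyq htq
  rw [show toR (b - q) = x + (toR b - x - toR q) by rw [toR_sub]; abel]
  exact Set.add_mem_add ⟨by simpa [extR_eq_dotProduct hτt] using hxA, hxD⟩ hbq

/-- With `Q = C ∩ ℤ^d` for the pointed cone `C` generated by the `ρ_i`,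
`G` the associated zonotope, and `τ` a functional nonnegative on `Q` cutting out a facet
`F` of `Q`: every `b ∈ Q` with `τ(b) > τ(a)` can be written `b = b₀ + q` with `q ∈ Q` and
`b₀` a lattice point of `({τ = τ(a)} ∩ ℝ₊D) + G` for some face `D` of `Q` with `D ∩ F = {0}`. -/
theorem stmt3 {d m : ℕ} (ρ : Fin m → (Fin d → ℤ))
    (C : Set (Fin d → ℝ))
    (hC : C = {y | ∃ c : Fin m → ℝ, (∀ i, 0 ≤ c i) ∧ y = ∑ i, c i • toR (ρ i)})
    (hpointed : C ∩ (-C) = {0})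
    (Q : Set (Fin d → ℤ)) (hQ : Q = {q | toR q ∈ C})
    (G : Set (Fin d → ℝ))
    (hG : G = {y | ∃ t : Fin m → ℝ, (∀ i, 0 ≤ t i ∧ t i ≤ 1) ∧ y = ∑ i, t i • toR (ρ i)})
    (τ : (Fin d → ℤ) →ₗ[ℤ] ℤ) (hτpos : ∀ q ∈ Q, 0 ≤ τ q)
    (F : Set (Fin d → ℤ)) (hFdef : F = {q | q ∈ Q ∧ τ q = 0})
    (hfacet : Module.finrank ℝ (Submodule.span ℝ (toR '' F)) = d - 1)
    (a : Fin d → ℤ) (ha : a ∈ Q)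
    (b : Fin d → ℤ) (hb : b ∈ Q) (hba : τ a < τ b) :
    ∃ D : Set (Fin d → ℤ), IsFaceOf Q D ∧ D ∩ F = {0} ∧
      ∃ (b₀ : Fin d → ℤ) (q : Fin d → ℤ), q ∈ Q ∧ b = b₀ + q ∧
        toR b₀ ∈ ({x | extR τ x = (τ a : ℝ)} ∩ nonnegSpan (toR '' D)) + G :=
  stmt3_general ρ C hC hpointed Q hQ G hG τ hτpos F hFdef a ha b hb hba
end

section
/- Let Q ⊆ ℤ^d be a saturated affine semigroup presented as Q = {β ∈ ℤ^d : τ_i(β) ≥ 0 for all i = 1,…,n}, and fix faces F_1,…,F_r of Q and degrees α_1,…,α_r ∈ ℤ^d. Then for every A ⊆ {1,…,r}, the sector S_A = {α ∈ ℤ^d : {j : α ∈ α_j + F_j − Q} = A} is a finite union of sets of lattice points of polyhedra whose bounding hyperplanes are parallel to the facets of Q: there exists a finite family of pairs of vectors c^(ℓ) ∈ (ℤ ∪ {−∞})^n and c'^(ℓ) ∈ (ℤ ∪ {+∞})^n such that S_A = ⋃_ℓ {β ∈ ℤ^d : c^(ℓ)_i < τ_i(β) ≤ c'^(ℓ)_i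 for all i = 1,…,n}. Moreover, the sets S_A over all A ⊆ {1,…,r} partition ℤ^d. -/
open Pointwise

theorem key_mem {d n : ℕ} (Q : AddSubmonoid (Fin d → ℤ))
    (τ : Fin n → ((Fin d → ℤ) →ₗ[ℤ] ℤ))
    (hQ : (Q : Set (Fin d → ℤ)) = {β | ∀ i, 0 ≤ τ i β})
    (F : Set (Fin d → ℤ)) (hF : IsFaceOf (Q : Set (Fin d → ℤ)) F)
    (a α : Fin d → ℤ) :
    α ∈ a +ᵥ (F - (Q : Set (Fin d → ℤ))) ↔
      ∀ i, (∀ f ∈ F, τ i f = 0) → τ i α ≤ τ i a := by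
  classical
  obtain ⟨lam, hlam, hFeq⟩ := hF
  have hQmem : ∀ x : Fin d → ℤ, x ∈ Q ↔ ∀ i, 0 ≤ τ i x := fun x => by
    rw [← SetLike.mem_coe, hQ]; rfl
  have hFsub : F ⊆ (Q : Set (Fin d → ℤ)) := by
    rw [hFeq]; intro x hx; exact hx.1
  have hF0 : (0 : Fin d → ℤ) ∈ F := by
    rw [hFeq]; exact ⟨Q.zero_mem, map_zero lam⟩
  have hFadd : ∀ x y : Fin d → ℤ, x ∈ F → y ∈ F → x + y ∈ F := by
    intro x y hx hy
    rw [hFeq] at hx hy ⊢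
    refine ⟨Q.add_mem hx.1 hy.1, ?_⟩
    have : lam (x + y) = lam x + lam y := map_add lam x y
    rw [this, hx.2, hy.2]; ring
  constructor
  · rintro ⟨y, ⟨f, hf, q, hq, rfl⟩, rfl⟩ i hi
    have h1 : τ i f = 0 := hi f hf
    have h2 : 0 ≤ τ i q := (hQmem q).1 hq i
    show τ i (a + (f - q)) ≤ τ i a
    simp only [map_add, map_sub, h1]
    omega
  · intro h
    -- choose for each "bad" i an element of F with positive value
    have hchoice : ∀ i : Fin n, ∃ g : Fin d → ℤ, g ∈ F ∧
        (¬ (∀ f ∈ F, τ i f = 0) → 1 ≤ τ i g) := by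
      intro i
      by_cases hi : ∀ f ∈ F, τ i f = 0
      · exact ⟨0, hF0, fun h' => absurd hi h'⟩
      · push_neg at hi
        obtain ⟨f, hf, hne⟩ := hi
        have : 0 ≤ τ i f := (hQmem f).1 (hFsub hf) i
        exact ⟨f, hf, fun _ => by omega⟩
    choose g hgF hgpos using hchoice
    set fstar : Fin d → ℤ := ∑ i : Fin n, g i with hfstar
    have hfstarF : fstar ∈ F := by
      rw [hfstar]
      exact Finset.sum_induction g (· ∈ F) hFadd hF0 (fun i _ => hgF i)
    have hfstarQ : ∀ i, 0 ≤ τ i fstar := fun i => (hQmem fstar).1 (hFsub hfstarF) i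
    have hfstarpos : ∀ i, ¬ (∀ f ∈ F, τ i f = 0) → 1 ≤ τ i fstar := by
      intro i hi
      have : τ i fstar = ∑ i' : Fin n, τ i (g i') := map_sum (τ i) g Finset.univ
      have hterm : ∀ i', 0 ≤ τ i (g i') := fun i' => (hQmem _).1 (hFsub (hgF i')) i
      calc (1 : ℤ) ≤ τ i (g i) := hgpos i hi
        _ ≤ ∑ i' : Fin n, τ i (g i') :=
          Finset.single_le_sum (fun i' _ => hterm i') (Finset.mem_univ i)
        _ = τ i fstar := this.symm
    set N : ℕ := Finset.univ.sup fun i => (τ i α - τ i a).toNat with hN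
    have hNle : ∀ i : Fin n, τ i α - τ i a ≤ (N : ℤ) := by
      intro i
      have : (τ i α - τ i a).toNat ≤ N := Finset.le_sup (f := fun i => (τ i α - τ i a).toNat) (Finset.mem_univ i)
      omega
    set f : Fin d → ℤ := N • fstar with hfdef
    have hfF : f ∈ F := by
      rw [hfdef]
      induction N with
      | zero => simpa using hF0
      | succ k ih =>
        have : (k+1) • fstar = k • fstar + fstar := by rw [succ_nsmul]
        rw [this]; exact hFadd _ _ ih hfstarF
    have hfval : ∀ i, τ i f = (N : ℤ) * τ i fstar := by
      intro i; rw [hfdef, map_nsmul]; simp [nsmul_eq_mul]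
    set q : Fin d → ℤ := a + f - α with hqdef
    have hqQ : q ∈ Q := by
      rw [hQmem]
      intro i
      have hq : τ i q = τ i a + τ i f - τ i α := by
        rw [hqdef]; simp [map_add, map_sub]
      by_cases hi : ∀ f' ∈ F, τ i f' = 0
      · have h1 : τ i f = 0 := hi f hfF
        have h2 := h i hi
        omega
      · have h1 : 1 ≤ τ i fstar := hfstarpos i hi
        have h2 : (N : ℤ) ≤ (N : ℤ) * τ i fstar := le_mul_of_one_le_right (by positivity) h1
        have h3 := hNle i
        rw [hq, hfval i]
        omega
    refine ⟨f - q, ⟨f, hfF, q, hqQ, rfl⟩, ?_⟩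
    rw [hqdef]
    funext x
    simp [vadd_eq_add]
    ring

open Pointwise

/-- Proposition 5.1, polyhedrality of sectors.  For a saturated affine
semigroup `Q` presented by facet functionals `τ_1,…,τ_n`, faces `F_1,…,F_r` and degrees
`α_1,…,α_r`: every sector `S_A = {α : {j : α ∈ α_j + F_j − Q} = A}` is a finite union of
sets of the form `{β : c_i < τ_i(β) ≤ c'_i ∀ i}` with `c ∈ (ℤ ∪ {−∞})^n` and
`c' ∈ (ℤ ∪ {+∞})^n`, and the sectors `S_A` partition `ℤ^d`. -/
theorem stmt13 {d n r : ℕ} (Q : AddSubmonoid (Fin d → ℤ)) (hfg : Q.FG)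
    (τ : Fin n → ((Fin d → ℤ) →ₗ[ℤ] ℤ))
    (hQ : (Q : Set (Fin d → ℤ)) = {β | ∀ i, 0 ≤ τ i β})
    (F : Fin r → Set (Fin d → ℤ))
    (hFface : ∀ j, IsFaceOf (Q : Set (Fin d → ℤ)) (F j))
    (αs : Fin r → (Fin d → ℤ)) :
    (∀ A : Set (Fin r),
      ∃ (L : ℕ) (c : Fin L → Fin n → WithBot ℤ) (c' : Fin L → Fin n → WithTop ℤ),
        {α : Fin d → ℤ | {j | α ∈ αs j +ᵥ (F j - (Q : Set (Fin d → ℤ)))} = A} =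
          ⋃ ℓ, {β : Fin d → ℤ | ∀ i,
            c ℓ i < (τ i β : WithBot ℤ) ∧ (τ i β : WithTop ℤ) ≤ c' ℓ i}) ∧
    (∀ α : Fin d → ℤ, ∃! A : Set (Fin r),
      α ∈ {α' : Fin d → ℤ | {j | α' ∈ αs j +ᵥ (F j - (Q : Set (Fin d → ℤ)))} = A}) := by
  classical
  have hmem : ∀ (α : Fin d → ℤ) (j : Fin r),
      α ∈ αs j +ᵥ (F j - (Q : Set (Fin d → ℤ))) ↔
        ∀ i, (∀ f ∈ F j, τ i f = 0) → τ i α ≤ τ i (αs j) :=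
    fun α j => key_mem Q τ hQ (F j) (hFface j) (αs j) α
  set P : Fin r → Fin n → Prop := fun j i => ∀ f ∈ F j, τ i f = 0 with hP
  constructor
  · intro A
    set valid : Finset (Fin n → Fin r → Bool) :=
      Finset.univ.filter (fun b => {j | ∀ i, P j i → b i j = true} = A) with hvalid
    set cdef : (Fin n → Fin r → Bool) → Fin n → WithBot ℤ := fun b i =>
      (Finset.univ.filter fun j => b i j = false).sup
        (fun j => ((τ i (αs j) : ℤ) : WithBot ℤ)) with hcdef
    set c'def : (Fin n → Fin r → Bool) → Fin n → WithTop ℤ := fun b i =>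
      (Finset.univ.filter fun j => b i j = true).inf
        (fun j => ((τ i (αs j) : ℤ) : WithTop ℤ)) with hc'def
    have hbox : ∀ (b : Fin n → Fin r → Bool) (β : Fin d → ℤ),
        (∀ i, cdef b i < (τ i β : WithBot ℤ) ∧ (τ i β : WithTop ℤ) ≤ c'def b i) ↔
          ∀ i j, (τ i β ≤ τ i (αs j) ↔ b i j = true) := by
      intro b β
      constructor
      · intro h i j
        obtain ⟨h1, h2⟩ := h i
        rw [hcdef, Finset.sup_lt_iff (WithBot.bot_lt_coe _)] at h1
        rw [hc'def, Finset.le_inf_iff] at h2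
        constructor
        · intro hle
          by_contra hb
          have hbf : b i j = false := by simpa using hb
          have := h1 j (Finset.mem_filter.2 ⟨Finset.mem_univ j, hbf⟩)
          rw [WithBot.coe_lt_coe] at this
          omega
        · intro hb
          have := h2 j (Finset.mem_filter.2 ⟨Finset.mem_univ j, hb⟩)
          exact_mod_cast this
      · intro h i
        constructor
        · rw [hcdef, Finset.sup_lt_iff (WithBot.bot_lt_coe _)]
          intro j hj
          have hbf : b i j = false := (Finset.mem_filter.1 hj).2
          have : ¬ τ i β ≤ τ i (αs j) := by
            intro hle
            have := (h i j).1 hle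
            rw [this] at hbf; exact absurd hbf (by simp)
          rw [WithBot.coe_lt_coe]
          omega
        · rw [hc'def, Finset.le_inf_iff]
          intro j hj
          have hbt : b i j = true := (Finset.mem_filter.1 hj).2
          have := (h i j).2 hbt
          exact_mod_cast this
      
    refine ⟨valid.card, fun ℓ => cdef (valid.equivFin.symm ℓ : _),
      fun ℓ => c'def (valid.equivFin.symm ℓ : _), ?_⟩
    ext α
    simp only [Set.mem_setOf_eq, Set.mem_iUnion]
    constructor
    · intro hA
      set b : Fin n → Fin r → Bool := fun i j => decide (τ i α ≤ τ i (αs j)) with hb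
      have hbv : b ∈ valid := by
        rw [hvalid, Finset.mem_filter]
        refine ⟨Finset.mem_univ _, ?_⟩
        rw [← hA]
        ext j
        simp only [Set.mem_setOf_eq, hb, decide_eq_true_eq, hmem α j, hP]
      refine ⟨valid.equivFin ⟨b, hbv⟩, ?_⟩
      have hsimp : (valid.equivFin.symm (valid.equivFin ⟨b, hbv⟩) : Fin n → Fin r → Bool) = b := by
        rw [Equiv.symm_apply_apply]
      rw [hsimp]
      exact (hbox b α).2 (fun i j => by simp [hb])
    · rintro ⟨ℓ, hℓ⟩
      set b : Fin n → Fin r → Bool := ((valid.equivFin.symm ℓ : { x // x ∈ valid }) : Fin n → Fin r → Bool) with hb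
      have hbv : (valid.equivFin.symm ℓ : Fin n → Fin r → Bool) ∈ valid :=
        (valid.equivFin.symm ℓ).2
      rw [← hb] at hbv
      have hchar := (hbox b α).1 hℓ
      rw [hvalid, Finset.mem_filter] at hbv
      rw [← hbv.2]
      ext j
      simp only [Set.mem_setOf_eq, hmem α j, hP]
      constructor
      · intro hall i hi
        exact (hchar i j).1 (hall i hi)
      · intro hall i hi
        exact (hchar i j).2 (hall i hi)
  · intro α
    exact ⟨{j | α ∈ αs j +ᵥ (F j - (Q : Set (Fin d → ℤ)))}, rfl, fun A hA => hA.symm⟩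
end
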